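/- If the affine frames U_{A,X}(Ψ) = {D_A^n T_{Xz} ψ_i} and U_{B,Y}(Φ) = {D_B^n T_{Yz} φ_i} are dual frames for L²(ℝ^d), then A = B. -/

import Mathlib

open MeasureTheory Matrix
open scoped InnerProductSpace

noncomputable section

/-- `L²(ℝ^d)`. -/
abbrev L2 (d : ℕ) := Lp ℂ 2 (volume : Measure (Fin d → ℝ))

/-- A sequence `x : J → H` is a Bessel sequence. -/
def Bessel {H J : Type*} [NormedAddCommGroup H] [InnerProductSpace ℂ H] (x : J → H) : Prop :=
  ∃ M : ℝ, ∀ v : H, Summable (fun j => ‖⟪v, x j⟫_ℂ‖ ^ 2) ∧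
    (∑' j, ‖⟪v, x j⟫_ℂ‖ ^ 2) ≤ M * ‖v‖ ^ 2

/-- A real matrix is expansive if all of its (complex) eigenvalues have modulus
strictly greater than `1`. -/
def Matrix.Expansive {d : ℕ} (A : Matrix (Fin d) (Fin d) ℝ) : Prop :=
  ∀ z : ℂ, (A.map (algebraMap ℝ ℂ)).charpoly.IsRoot z → 1 < ‖z‖

/-!
Applying `D_B^{-m}` to the dual expansion of `D_A^m f`, and moving `D_A^m` across the inner
product (it is unitary), shifts the dilation index of every term by `-m`; after reindexing
this is the expansion of `f` itself, so `D_B^{-m} D_A^m = 1`, i.e. `D_A^m = D_B^m`. Testing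
`D_A^1 = D_B^1` on continuous compactly supported functions, which separate points by
Urysohn's lemma, then forces `A x = B x` for every `x`.
-/

theorem map_mulVec_volume {ι : Type*} [Fintype ι] [DecidableEq ι] {M : Matrix ι ι ℝ}
    (hM : M.det ≠ 0) :
    Measure.map (M *ᵥ ·) volume =
      ENNReal.ofReal |M.det⁻¹| • (volume : Measure (ι → ℝ)) := by
  rw [← Real.map_matrix_volume_pi_eq_smul_volume_pi hM]
  exact congrArg (Measure.map · volume) (funext fun x => (Matrix.toLin'_apply M x).symm)

theorem integral_comp_mulVec {ι E : Type*} [Fintype ι] [DecidableEq ι]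
    [NormedAddCommGroup E] [NormedSpace ℝ E] {M : Matrix ι ι ℝ} (hM : M.det ≠ 0)
    (g : (ι → ℝ) → E) :
    ∫ x, g (M *ᵥ x) = |M.det|⁻¹ • ∫ y, g y := by
  have hemb : MeasurableEmbedding (M *ᵥ ·) :=
    (Matrix.toLin' M).continuous_of_finiteDimensional.measurableEmbedding
      (mulVec_injective_of_det_ne_zero hM)
  rw [← hemb.integral_map, map_mulVec_volume hM,
    integral_smul_measure, ENNReal.toReal_ofReal (abs_nonneg _), abs_inv]

theorem quasiMeasurePreserving_mulVec {ι : Type*} [Fintype ι] [DecidableEq ι]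
    {M : Matrix ι ι ℝ} (hM : M.det ≠ 0) :
    Measure.QuasiMeasurePreserving (M *ᵥ ·) (volume : Measure (ι → ℝ)) volume := by
  refine ⟨(Matrix.toLin' M).continuous_of_finiteDimensional.measurable, ?_⟩
  rw [map_mulVec_volume hM]
  exact Measure.smul_absolutelyContinuous

theorem Matrix.eq_of_forall_continuous_comp_eq {ι : Type*} [Fintype ι] {A B : Matrix ι ι ℝ}
    {c c' : ℂ} (hc : c ≠ 0)
    (h : ∀ F : (ι → ℝ) → ℂ, Continuous F → HasCompactSupport F →
      ∀ x, c * F (A *ᵥ x) = c' * F (B *ᵥ x)) :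
    A = B := by
  refine Matrix.ext_iff_mulVec.mpr fun x => ?_
  by_contra hne
  obtain ⟨F, hFA, hFB, hFc, -⟩ := exists_continuous_one_zero_of_isCompact
    isCompact_singleton isClosed_singleton (Set.disjoint_singleton.mpr hne)
  have := h (fun y => (F y : ℂ)) (Complex.continuous_ofReal.comp F.continuous)
    (hFc.comp_left Complex.ofReal_zero) x
  rw [hFA rfl, hFB rfl] at this
  simp [hc] at this

/-- `D n` is the paper's `D_Mⁿ`, known only through its action almost everywhere. -/
def IsDilationPowers {d : ℕ} (M : Matrix (Fin d) (Fin d) ℝ)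
    (D : ℤ → (L2 d →L[ℂ] L2 d)) : Prop :=
  ∀ (n : ℤ) (f : L2 d), (⇑(D n f)) =ᵐ[volume]
    fun x => (Real.sqrt |(M ^ n).det| : ℂ) * f ((M ^ n).mulVec x)

namespace IsDilationPowers

variable {d : ℕ} {M : Matrix (Fin d) (Fin d) ℝ} {D : ℤ → (L2 d →L[ℂ] L2 d)}

theorem zero_apply (hD : IsDilationPowers M D) (f : L2 d) : D 0 f = f :=
  Lp.ext <| (hD 0 f).trans <| by simp

theorem add_apply (hD : IsDilationPowers M D) (hM : IsUnit M.det) (m n : ℤ) (f : L2 d) :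
    D (m + n) f = D m (D n f) := by
  refine Lp.ext ((hD (m + n) f).trans ?_)
  have hn := (quasiMeasurePreserving_mulVec (hM.det_zpow m).ne_zero).ae_eq_comp (hD n f)
  filter_upwards [hD m (D n f), hn] with x hm hn
  simp only [Function.comp_apply] at hn
  have hdet : Real.sqrt |(M ^ (m + n)).det| =
      Real.sqrt |(M ^ m).det| * Real.sqrt |(M ^ n).det| := by
    rw [Matrix.zpow_add hM, det_mul, abs_mul, Real.sqrt_mul (abs_nonneg _)]
  rw [hm, hn, mulVec_mulVec, ← Matrix.zpow_add hM, add_comm n m, hdet]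
  push_cast
  ring

theorem inner_map_map (hD : IsDilationPowers M D) (hM : IsUnit M.det) (n : ℤ) (f g : L2 d) :
    ⟪D n f, D n g⟫_ℂ = ⟪f, g⟫_ℂ := by
  have hdet : (M ^ n).det ≠ 0 := (hM.det_zpow n).ne_zero
  have hsq : ((|(M ^ n).det| : ℝ) : ℂ) =
      (Real.sqrt |(M ^ n).det| : ℂ) * (Real.sqrt |(M ^ n).det| : ℂ) := by
    rw [← Complex.ofReal_mul, Real.mul_self_sqrt (abs_nonneg _)]
  have hpoint : (fun x => ⟪D n f x, D n g x⟫_ℂ) =ᵐ[volume]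
      fun x => ((|(M ^ n).det| : ℝ) : ℂ) * ⟪f (M ^ n *ᵥ x), g (M ^ n *ᵥ x)⟫_ℂ := by
    filter_upwards [hD n f, hD n g] with x hf hg
    simp only [hf, hg, hsq, RCLike.inner_apply, map_mul, Complex.conj_ofReal]
    ring
  rw [L2.inner_def, L2.inner_def, integral_congr_ae hpoint, integral_const_mul,
    integral_comp_mulVec hdet (fun y => ⟪f y, g y⟫_ℂ), Complex.real_smul, ← mul_assoc,
    ← Complex.ofReal_mul, mul_inv_cancel₀ (abs_ne_zero.2 hdet), Complex.ofReal_one, one_mul]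

theorem mul_comp_eq_of_continuous {A B : Matrix (Fin d) (Fin d) ℝ} (hA : IsDilationPowers A D)
    (hB : IsDilationPowers B D) (hAdet : A.det ≠ 0) (hBdet : B.det ≠ 0)
    {F : (Fin d → ℝ) → ℂ} (hF : Continuous F) (hFc : HasCompactSupport F)
    (x : Fin d → ℝ) :
    (Real.sqrt |A.det| : ℂ) * F (A *ᵥ x) = (Real.sqrt |B.det| : ℂ) * F (B *ᵥ x) := by
  have hFmem : MemLp F 2 volume := hF.memLp_of_hasCompactSupport hFc
  have hA' := (quasiMeasurePreserving_mulVec hAdet).ae_eq_comp hFmem.coeFn_toLp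
  have hB' := (quasiMeasurePreserving_mulVec hBdet).ae_eq_comp hFmem.coeFn_toLp
  have hae : (fun x => (Real.sqrt |A.det| : ℂ) * F (A *ᵥ x)) =ᵐ[volume]
      fun x => (Real.sqrt |B.det| : ℂ) * F (B *ᵥ x) := by
    filter_upwards [hA 1 (hFmem.toLp F), hB 1 (hFmem.toLp F), hA', hB'] with y hAy hBy hAy' hBy'
    simp only [zpow_one, Function.comp_apply] at hAy hBy hAy' hBy'
    rw [← hAy', ← hBy', ← hAy, ← hBy]
  have hcont : ∀ N : Matrix (Fin d) (Fin d) ℝ, Continuous fun x => F (N *ᵥ x) := fun _ =>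
    hF.comp (continuous_const.matrix_mulVec continuous_id)
  exact congrFun ((continuous_const.mul (hcont A)).ae_eq_iff_eq volume
    (continuous_const.mul (hcont B)) |>.mp hae) x

theorem matrix_eq {A B : Matrix (Fin d) (Fin d) ℝ} (hA : IsDilationPowers A D)
    (hB : IsDilationPowers B D) (hAdet : A.det ≠ 0) (hBdet : B.det ≠ 0) : A = B :=
  Matrix.eq_of_forall_continuous_comp_eq
    (by exact_mod_cast (Real.sqrt_pos.2 (abs_pos.2 hAdet)).ne')
    fun _ hF hFc x => hA.mul_comp_eq_of_continuous hB hAdet hBdet hF hFc x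

end IsDilationPowers

section DualSystems

variable {H ι : Type*} [NormedAddCommGroup H] [InnerProductSpace ℂ H]

theorem apply_neg_apply_eq_self_of_hasSum_dual (U V : ℤ → (H →L[ℂ] H))
    (hU_add : ∀ (m n : ℤ) (f : H), U (m + n) f = U m (U n f))
    (hU_inner : ∀ (n : ℤ) (f g : H), ⟪U n f, U n g⟫_ℂ = ⟪f, g⟫_ℂ)
    (hV_add : ∀ (m n : ℤ) (f : H), V (m + n) f = V m (V n f)) (a b : ι → H)
    (hdual : ∀ f : H,
      HasSum (fun p : ℤ × ι => ⟪f, U p.1 (a p.2)⟫_ℂ • V p.1 (b p.2)) f)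
    (m : ℤ) (f : H) :
    V (-m) (U m f) = f := by
  have hterm : ∀ (n : ℤ) (i : ι), V (-m) (⟪U m f, U n (a i)⟫_ℂ • V n (b i)) =
      ⟪f, U (n - m) (a i)⟫_ℂ • V (n - m) (b i) := by
    intro n i
    have hUn : U n (a i) = U m (U (n - m) (a i)) := by rw [← hU_add, add_sub_cancel]
    have hVn : V (-m) (V n (b i)) = V (n - m) (b i) := by rw [← hV_add, neg_add_eq_sub]
    rw [map_smul, hUn, hU_inner, hVn]
  have hshift : HasSum (fun p : ℤ × ι => ⟪f, U (p.1 - m) (a p.2)⟫_ℂ • V (p.1 - m) (b p.2))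
      (V (-m) (U m f)) := by
    simpa only [hterm] using (V (-m)).hasSum (hdual (U m f))
  have hreindex := ((Equiv.subRight m).prodCongr (Equiv.refl ι)).hasSum_iff
    (f := fun p : ℤ × ι => ⟪f, U p.1 (a p.2)⟫_ℂ • V p.1 (b p.2)) (a := V (-m) (U m f))
  exact (hreindex.mp hshift).unique (hdual f)

theorem eq_of_hasSum_dual (U V : ℤ → (H →L[ℂ] H))
    (hU_add : ∀ (m n : ℤ) (f : H), U (m + n) f = U m (U n f))
    (hU_inner : ∀ (n : ℤ) (f g : H), ⟪U n f, U n g⟫_ℂ = ⟪f, g⟫_ℂ)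
    (hV_add : ∀ (m n : ℤ) (f : H), V (m + n) f = V m (V n f)) (hV_zero : ∀ f : H, V 0 f = f)
    (a b : ι → H)
    (hdual : ∀ f : H,
      HasSum (fun p : ℤ × ι => ⟪f, U p.1 (a p.2)⟫_ℂ • V p.1 (b p.2)) f) :
    U = V := by
  ext m f
  calc U m f = V (m + -m) (U m f) := by rw [add_neg_cancel, hV_zero]
    _ = V m f := by
      rw [hV_add, apply_neg_apply_eq_self_of_hasSum_dual U V hU_add hU_inner hV_add a b hdual]

end DualSystems

theorem dual_affine_frames_same_dilation_general {d r : ℕ}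
    (A B : Matrix (Fin d) (Fin d) ℝ)
    (hAdet : IsUnit A.det) (hBdet : IsUnit B.det)
    (X Y : Matrix (Fin d) (Fin d) ℝ)
    (ψ φ : Fin r → L2 d)
    (T : (Fin d → ℝ) → (L2 d →L[ℂ] L2 d))
    (DApow DBpow : ℤ → (L2 d →L[ℂ] L2 d))
    (hDApow : ∀ (n : ℤ) (f : L2 d), (⇑(DApow n f)) =ᵐ[volume]
      fun x => (Real.sqrt |(A ^ n).det| : ℂ) * f ((A ^ n).mulVec x))
    (hDBpow : ∀ (n : ℤ) (f : L2 d), (⇑(DBpow n f)) =ᵐ[volume]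
      fun x => (Real.sqrt |(B ^ n).det| : ℂ) * f ((B ^ n).mulVec x))
    (hdual : ∀ f : L2 d, HasSum (fun w : Fin r × ℤ × (Fin d → ℤ) =>
      ⟪f, DApow w.2.1 (T (X.mulVec fun i => (w.2.2 i : ℝ)) (ψ w.1))⟫_ℂ •
        DBpow w.2.1 (T (Y.mulVec fun i => (w.2.2 i : ℝ)) (φ w.1))) f) :
    A = B := by
  have hDA : IsDilationPowers A DApow := hDApow
  have hDB : IsDilationPowers B DBpow := hDBpow
  let swap : ℤ × Fin r × (Fin d → ℤ) ≃ Fin r × ℤ × (Fin d → ℤ) :=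
    ⟨fun p => (p.2.1, p.1, p.2.2), fun p => (p.2.1, p.1, p.2.2), fun _ => rfl, fun _ => rfl⟩
  have hD : DApow = DBpow :=
    eq_of_hasSum_dual DApow DBpow (hDA.add_apply hAdet) (hDA.inner_map_map hAdet)
      (hDB.add_apply hBdet) hDB.zero_apply
      (fun q : Fin r × (Fin d → ℤ) => T (X *ᵥ (q.2 ·)) (ψ q.1))
      (fun q : Fin r × (Fin d → ℤ) => T (Y *ᵥ (q.2 ·)) (φ q.1)) fun f => by
        have h := swap.hasSum_iff.mpr (hdual f)
        exact h
  rw [hD] at hDA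
  exact hDA.matrix_eq hDB hAdet.ne_zero hBdet.ne_zero

/-- If the affine frames `U_{A,X}(Ψ) = {D_A^n T_{Xz} ψ_i}` and `U_{B,Y}(Φ) = {D_B^n T_{Yz} φ_i}`
are dual frames for `L²(ℝ^d)`, then `A = B`. -/
theorem dual_affine_frames_same_dilation {d r : ℕ}
    (A B : Matrix (Fin d) (Fin d) ℝ) (hA : A.Expansive) (hB : B.Expansive)
    (hAdet : IsUnit A.det) (hBdet : IsUnit B.det)
    (X Y : Matrix (Fin d) (Fin d) ℝ) (hX : IsUnit X.det) (hY : IsUnit Y.det)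
    (ψ φ : Fin r → L2 d)
    (T : (Fin d → ℝ) → (L2 d →L[ℂ] L2 d))
    (hT : ∀ (α : Fin d → ℝ) (f : L2 d), (⇑(T α f)) =ᵐ[volume] fun x => f (x - α))
    (DApow DBpow : ℤ → (L2 d →L[ℂ] L2 d))
    (hDApow : ∀ (n : ℤ) (f : L2 d), (⇑(DApow n f)) =ᵐ[volume]
      fun x => (Real.sqrt |(A ^ n).det| : ℂ) * f ((A ^ n).mulVec x))
    (hDBpow : ∀ (n : ℤ) (f : L2 d), (⇑(DBpow n f)) =ᵐ[volume]
      fun x => (Real.sqrt |(B ^ n).det| : ℂ) * f ((B ^ n).mulVec x))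
    (hGA : Bessel (fun w : Fin r × ℤ × (Fin d → ℤ) =>
      DApow w.2.1 (T (X.mulVec fun i => (w.2.2 i : ℝ)) (ψ w.1))))
    (hGB : Bessel (fun w : Fin r × ℤ × (Fin d → ℤ) =>
      DBpow w.2.1 (T (Y.mulVec fun i => (w.2.2 i : ℝ)) (φ w.1))))
    (hdual : ∀ f : L2 d, HasSum (fun w : Fin r × ℤ × (Fin d → ℤ) =>
      ⟪f, DApow w.2.1 (T (X.mulVec fun i => (w.2.2 i : ℝ)) (ψ w.1))⟫_ℂ •
        DBpow w.2.1 (T (Y.mulVec fun i => (w.2.2 i : ℝ)) (φ w.1))) f) :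
    A = B :=
  dual_affine_frames_same_dilation_general A B hAdet hBdet X Y ψ φ T DApow DBpow hDApow hDBpow hdual
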